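/- arXiv:1209.3836 — 4 statements merged into one kernel-verified Lean document; each statement's English description precedes it below -/
import Mathlib

section
/- Let α, β, γ, t be complex numbers with t ≠ 0. There exists a complex constant C (depending only on α, β, γ, t) such that for all complex q ≠ 0 and all complex p: t·H̃V(α,β,γ;t; 1 − 1/q, q(pq − γ)) = t·HV(β+γ, α+β, −β; t; q, p) + C. In other words, the canonical transformation q ↦ 1 − 1/q, p ↦ q(pq − γ) changes the Hamiltonian H̃V(α,β,γ;t;·,·) into the biquadratic Hamiltonian HV(β+γ, α+β, −β;t;·,·) up to an additive quantity independent of the canonical variables. -/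
open Filter Topology

/-- `t·HV(a,b,c;t;q,p)` : the (t-multiplied) fifth Painlevé Hamiltonian. -/
noncomputable def tHV (a b c t q p : ℂ) : ℂ :=
  p * (p + t) * q * (q - 1) + b * p * q + c * p - (a + c) * t * q

/-- `t·H̃V(a,b,c;t;q,p)` : the alternative (t-multiplied) fifth Painlevé Hamiltonian. -/
noncomputable def tHtV (a b c t q p : ℂ) : ℂ :=
  q * (q - 1) ^ 2 * p ^ 2 + ((1 - q) * (a + (b + 2 * c) * q) + t * q) * p
    - c * (b + c) * (1 - q)

theorem tHtV_one_sub_inv (α β γ t : ℂ) {q : ℂ} (hq : q ≠ 0) (p : ℂ) :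
    tHtV α β γ t (1 - 1 / q) (q * (p * q - γ)) =
      tHV (β + γ) (α + β) (-β) t q p + γ * (t - α - β - γ) := by
  unfold tHtV tHV
  field_simp
  ring

theorem stmt0_general (α β γ t : ℂ) :
    ∃ C : ℂ, ∀ q p : ℂ, q ≠ 0 →
      tHtV α β γ t (1 - 1 / q) (q * (p * q - γ)) =
        tHV (β + γ) (α + β) (-β) t q p + C :=
  ⟨_, fun _ p hq => tHtV_one_sub_inv α β γ t hq p⟩

/-- The canonical transformation `q ↦ 1 − 1/q`, `p ↦ q(pq − γ)` changes `H̃V(α,β,γ)` into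
`HV(β+γ, α+β, −β)` up to an additive quantity independent of the canonical variables. -/
theorem stmt0 (α β γ t : ℂ) (ht : t ≠ 0) :
    ∃ C : ℂ, ∀ q p : ℂ, q ≠ 0 →
      tHtV α β γ t (1 - 1 / q) (q * (p * q - γ)) =
        tHV (β + γ) (α + β) (-β) t q p + C :=
  stmt0_general α β γ t
end

section
/- Fix α, β, γ, δ ∈ ℂ. Let q1, p1, q2, p2 : U → ℂ be differentiable on an open set U ⊆ ℂ and satisfy the Hamiltonian system of the A4-type Noumi–Yamada Hamiltonian H(t) = HIV(β,α;t;q1,p1) + HIV(δ,α+γ;t;q2,p2) + 2q1p1p2, i.e. for all t ∈ U: q1' = q1(2p1 − q1 − t) + α + 2q1p2, p1' = −(p1(p1 − 2q1 − t) + β + 2p1p2), q2' = q2(2p2 − q2 − t) + α + γ + 2q1p1, p2' = −(p2(p2 − 2q2 − t) + δ). Define f1 := −q1, f2 := p1, f3 := q1 − q2, f4 := p2, f0(t) := t − f1 − f2 − f3 − f4, and α1 := −α, α2 := −β, α3 := −γ, α4 := −δ, α0 := 1 + α + β + γ + δ. Then for every i ∈ ℤ/5ℤ and every t ∈ U: fᵢ'(t)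 = fᵢ(f_{i+1} − f_{i+2} + f_{i+3} − f_{i+4}) + αᵢ, where the indices are taken modulo 5. That is, the Hamiltonian system of H_NY^{A4} is the Noumi–Yamada system of type A4^{(1)}. -/
noncomputable def HIV (a b t q p : ℂ) : ℂ := p * q * (p - q - t) + b * p + a * q

theorem stmt2_general (α β γ δ : ℂ) (U : Set ℂ)
    (q1 p1 q2 p2 : ℂ → ℂ)
    (hq1 : ∀ t ∈ U, HasDerivAt q1 (q1 t * (2 * p1 t - q1 t - t) + α + 2 * q1 t * p2 t) t)
    (hp1 : ∀ t ∈ U, HasDerivAt p1 (-(p1 t * (p1 t - 2 * q1 t - t) + β + 2 * p1 t * p2 t)) t)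
    (hq2 : ∀ t ∈ U, HasDerivAt q2 (q2 t * (2 * p2 t - q2 t - t) + α + γ + 2 * q1 t * p1 t) t)
    (hp2 : ∀ t ∈ U, HasDerivAt p2 (-(p2 t * (p2 t - 2 * q2 t - t) + δ)) t)
    (f : Fin 5 → ℂ → ℂ)
    (hf : f = ![fun t => t - (-(q1 t)) - p1 t - (q1 t - q2 t) - p2 t,
                fun t => -(q1 t),
                p1,
                fun t => q1 t - q2 t,
                p2])
    (a : Fin 5 → ℂ)
    (ha : a = ![1 + α + β + γ + δ, -α, -β, -γ, -δ]) :
    ∀ i : Fin 5, ∀ t ∈ U,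
      HasDerivAt (f i)
        (f i t * (f (i + 1) t - f (i + 2) t + f (i + 3) t - f (i + 4) t) + a i) t := by
  subst hf ha
  intro i t ht
  have q1' := hq1 t ht
  have p1' := hp1 t ht
  have q2' := hq2 t ht
  have p2' := hp2 t ht
  fin_cases i <;> simp only [Fin.reduceFinMk, Fin.reduceAdd, Fin.isValue, Matrix.cons_val]
  · exact ((((hasDerivAt_id t).sub q1'.neg).sub p1').sub (q1'.sub q2')).sub p2'
      |>.congr_deriv (by ring)
  · exact q1'.neg.congr_deriv (by ring)
  · exact p1'.congr_deriv (by ring)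
  · exact (q1'.sub q2').congr_deriv (by ring)
  · exact p2'.congr_deriv (by ring)

/-- The Hamiltonian system of the A4-type Noumi–Yamada Hamiltonian
`H = HIV(β,α;t;q1,p1) + HIV(δ,α+γ;t;q2,p2) + 2 q1 p1 p2`
is the Noumi–Yamada system of type `A4^(1)`:
`fᵢ' = fᵢ(f_{i+1} − f_{i+2} + f_{i+3} − f_{i+4}) + αᵢ` for `i ∈ ℤ/5ℤ`. -/
theorem stmt2 (α β γ δ : ℂ) (U : Set ℂ) (hU : IsOpen U)
    (q1 p1 q2 p2 : ℂ → ℂ)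
    (hq1 : ∀ t ∈ U, HasDerivAt q1 (q1 t * (2 * p1 t - q1 t - t) + α + 2 * q1 t * p2 t) t)
    (hp1 : ∀ t ∈ U, HasDerivAt p1 (-(p1 t * (p1 t - 2 * q1 t - t) + β + 2 * p1 t * p2 t)) t)
    (hq2 : ∀ t ∈ U, HasDerivAt q2 (q2 t * (2 * p2 t - q2 t - t) + α + γ + 2 * q1 t * p1 t) t)
    (hp2 : ∀ t ∈ U, HasDerivAt p2 (-(p2 t * (p2 t - 2 * q2 t - t) + δ)) t)
    (f : Fin 5 → ℂ → ℂ)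
    (hf : f = ![fun t => t - (-(q1 t)) - p1 t - (q1 t - q2 t) - p2 t,
                fun t => -(q1 t),
                p1,
                fun t => q1 t - q2 t,
                p2])
    (a : Fin 5 → ℂ)
    (ha : a = ![1 + α + β + γ + δ, -α, -β, -γ, -δ]) :
    ∀ i : Fin 5, ∀ t ∈ U,
      HasDerivAt (f i)
        (f i t * (f (i + 1) t - f (i + 2) t + f (i + 3) t - f (i + 4) t) + a i) t :=
  stmt2_general α β γ δ U q1 p1 q2 p2 hq1 hp1 hq2 hp2 f hf a ha
end

section
/- Fix a, b ∈ ℂ. Let q1, p1, q2, p2 be complex-analytic functions of (t1, t2) on an open domain D ⊆ ℂ² on which t1 ≠ t2, satisfying the Hamiltonian system ∂qₖ/∂tⱼ = ∂Hⱼ/∂pₖ and ∂pₖ/∂tⱼ = −∂Hⱼ/∂qₖ for k, j ∈ {1,2}, where H1 = HG52_1(a,b;t1,t2;q1,p1,q2,p2) and H2 = HG52_2(a,b;t1,t2;q1,p1,q2,p2). Define the 3×3 matrices A3 := diag(0,−1,−1), A2 := [[0,−1,−1],[−p1,0,0],[−p2,0,0]], A1 := [[−p1−p2, −q1, −q2],[p1q1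 − a, p1 − t1, p1],[p2q2 − b, p2, p2 − t2]], A(x) := A3·x² + A2·x + A1, B1(x) := −diag(0,1,0)·x + [[0,−1,0],[−p1, (p2(q1−q2)+b)/(t1−t2) + q1, (p1(q1−q2)−a)/(t1−t2)],[0, (p2(q2−q1)−b)/(t1−t2), (p1(q2−q1)+a)/(t1−t2)]], B2(x) := −diag(0,0,1)·x + [[0,0,−1],[0, (p2(q1−q2)+b)/(t2−t1), (p1(q1−q2)−a)/(t2−t1)],[−p2, (p2(q2−q1)−b)/(t2−t1), (p1(q2−q1)+a)/(t2−t1) + q2]]. Then for j = 1, 2, for all x ∈ ℂ and all (t1,t2) ∈ D: ∂A(x)/∂tⱼ − ∂Bⱼ(x)/∂x + A(x)·Bⱼ(x) − Bⱼ(x)·A(x) = 0. -/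
open Filter Topology Matrix

/-- Second Painlevé Hamiltonian `HII(a;t;q,p)`. -/
noncomputable def HII (a t q p : ℂ) : ℂ := p ^ 2 - (q ^ 2 + t) * p - a * q

/-- Degenerate Garnier Hamiltonian of pattern 5/2+1+1 (first time variable). -/
noncomputable def HG52_1 (a b t1 t2 q1 p1 q2 p2 : ℂ) : ℂ :=
  HII (-a) t1 q1 p1 + p1 * p2
    + (1 / (t1 - t2)) * (p1 * (q1 - q2) - a) * (p2 * (q2 - q1) - b)

/-- Degenerate Garnier Hamiltonian of pattern 5/2+1+1 (second time variable). -/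
noncomputable def HG52_2 (a b t1 t2 q1 p1 q2 p2 : ℂ) : ℂ :=
  HII (-b) t2 q2 p2 + p1 * p2
    + (1 / (t2 - t1)) * (p1 * (q1 - q2) - a) * (p2 * (q2 - q1) - b)

/-- The matrix `A(x) = A3 x² + A2 x + A1` of the 5/2+1+1 linear problem. -/
noncomputable def A52 (a b t1 t2 q1 p1 q2 p2 x : ℂ) : Matrix (Fin 3) (Fin 3) ℂ :=
  x ^ 2 • Matrix.diagonal ![0, -1, -1]
    + x • !![0, -1, -1; -p1, 0, 0; -p2, 0, 0]
    + !![-p1 - p2, -q1, -q2;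
         p1 * q1 - a, p1 - t1, p1;
         p2 * q2 - b, p2, p2 - t2]

/-- The matrix `B1(x)` of the 5/2+1+1 deformation. -/
noncomputable def B52_1 (a b t1 t2 q1 p1 q2 p2 x : ℂ) : Matrix (Fin 3) (Fin 3) ℂ :=
  -(x • Matrix.diagonal ![0, 1, 0])
    + !![0, -1, 0;
         -p1, (p2 * (q1 - q2) + b) / (t1 - t2) + q1, (p1 * (q1 - q2) - a) / (t1 - t2);
         0, (p2 * (q2 - q1) - b) / (t1 - t2), (p1 * (q2 - q1) + a) / (t1 - t2)]

/-- The matrix `B2(x)` of the 5/2+1+1 deformation. -/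
noncomputable def B52_2 (a b t1 t2 q1 p1 q2 p2 x : ℂ) : Matrix (Fin 3) (Fin 3) ℂ :=
  -(x • Matrix.diagonal ![0, 0, 1])
    + !![0, 0, -1;
         0, (p2 * (q1 - q2) + b) / (t2 - t1), (p1 * (q1 - q2) - a) / (t2 - t1);
         -p2, (p2 * (q2 - q1) - b) / (t2 - t1), (p1 * (q2 - q1) + a) / (t2 - t1) + q2]


/-!
Along the first flow, Hamilton's equations give the `t1`-derivative of every entry of `A(x)`,
and the zero-curvature equation becomes a rational identity in `q1, p1, q2, p2, t1, t2, x`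
whose only denominator is `t1 - t2`.

The second flow is the first one with the two particles exchanged: the substitution
`(a, b, t1, t2, q1, p1, q2, p2) ↦ (b, a, t2, t1, q2, p2, q1, p1)` turns `HG52_1` into `HG52_2`,
and `A(x)` and `B1(x)` into the conjugates of `A(x)` and `B2(x)` by the transposition of the
last two basis vectors.
-/

theorem hasDerivAt_of_forall_eq_quadratic {𝕜 : Type*} [NontriviallyNormedField 𝕜]
    {f : 𝕜 → 𝕜} {x d : 𝕜} (c : 𝕜) (hf : ∀ w, f w = f x + d * (w - x) + c * (w - x) ^ 2) :
    HasDerivAt f d x := by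
  rw [funext hf]
  refine ((((hasDerivAt_id' x).sub_const x).const_mul d).const_add (f x) |>.add
    ((((hasDerivAt_id' x).sub_const x).pow 2).const_mul c)).congr_deriv ?_
  simp

section Hamiltonian

/- Each Hamiltonian is at most quadratic in each canonical variable; the witness passed to
`hasDerivAt_of_forall_eq_quadratic` is the coefficient of the square. -/

variable (a b t1 t2 q1 p1 q2 p2 : ℂ)

theorem deriv_HG52_1_p1 :
    deriv (fun w => HG52_1 a b t1 t2 q1 w q2 p2) p1
      = 2 * p1 - q1 ^ 2 - t1 + p2 + (q1 - q2) * (p2 * (q2 - q1) - b) / (t1 - t2) :=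
  (hasDerivAt_of_forall_eq_quadratic 1 fun w => by simp only [HG52_1, HII]; ring).deriv

theorem deriv_HG52_1_q1 :
    deriv (fun w => HG52_1 a b t1 t2 w p1 q2 p2) q1
      = -2 * q1 * p1 + a + (p1 * (p2 * (q2 - q1) - b) - p2 * (p1 * (q1 - q2) - a)) / (t1 - t2) :=
  (hasDerivAt_of_forall_eq_quadratic (-p1 - p1 * p2 / (t1 - t2)) fun w => by
    simp only [HG52_1, HII]; ring).deriv

theorem deriv_HG52_1_p2 :
    deriv (fun w => HG52_1 a b t1 t2 q1 p1 q2 w) p2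
      = p1 + (q2 - q1) * (p1 * (q1 - q2) - a) / (t1 - t2) :=
  (hasDerivAt_of_forall_eq_quadratic 0 fun w => by simp only [HG52_1, HII]; ring).deriv

theorem deriv_HG52_1_q2 :
    deriv (fun w => HG52_1 a b t1 t2 q1 p1 w p2) q2
      = (p2 * (p1 * (q1 - q2) - a) - p1 * (p2 * (q2 - q1) - b)) / (t1 - t2) :=
  (hasDerivAt_of_forall_eq_quadratic (-p1 * p2 / (t1 - t2)) fun w => by
    simp only [HG52_1, HII]; ring).deriv

theorem HG52_2_eq_HG52_1_swap : HG52_2 a b t1 t2 q1 p1 q2 p2 = HG52_1 b a t2 t1 q2 p2 q1 p1 := by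
  simp only [HG52_1, HG52_2]; ring

end Hamiltonian

theorem A52_eq (a b t1 t2 q1 p1 q2 p2 x : ℂ) :
    A52 a b t1 t2 q1 p1 q2 p2 x =
      !![-p1 - p2, -x - q1, -x - q2;
         p1 * q1 - x * p1 - a, p1 - t1 - x ^ 2, p1;
         p2 * q2 - x * p2 - b, p2, p2 - t2 - x ^ 2] := by
  ext i j
  fin_cases i <;> fin_cases j <;> simp [A52] <;> ring

theorem hasDerivAt_A52_apply {q1 p1 q2 p2 : ℂ → ℂ} {dq1 dp1 dq2 dp2 t : ℂ} (a b t2 x : ℂ)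
    (hq1 : HasDerivAt q1 dq1 t) (hp1 : HasDerivAt p1 dp1 t)
    (hq2 : HasDerivAt q2 dq2 t) (hp2 : HasDerivAt p2 dp2 t) (i j : Fin 3) :
    HasDerivAt (fun s => A52 a b s t2 (q1 s) (p1 s) (q2 s) (p2 s) x i j)
      (!![-dp1 - dp2, -dq1, -dq2;
          dp1 * q1 t + p1 t * dq1 - x * dp1, dp1 - 1, dp1;
          dp2 * q2 t + p2 t * dq2 - x * dp2, dp2, dp2] i j) t := by
  simp only [A52_eq]
  fin_cases i <;> fin_cases j <;>
    simp only [Fin.zero_eta, Fin.isValue, Fin.mk_one, Fin.reduceFinMk, of_apply, cons_val',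
      cons_val, cons_val_zero, cons_val_one, cons_val_fin_one]
  exacts [hp1.neg.sub hp2, hq1.const_sub (-x), hq2.const_sub (-x),
    ((hp1.mul hq1).sub (hp1.const_mul x)).sub_const a,
    (hp1.sub (hasDerivAt_id' t)).sub_const _, hp1,
    ((hp2.mul hq2).sub (hp2.const_mul x)).sub_const b, hp2, (hp2.sub_const t2).sub_const _]

theorem B52_1_eq (a b t1 t2 q1 p1 q2 p2 x : ℂ) :
    B52_1 a b t1 t2 q1 p1 q2 p2 x =
      !![0, -1, 0;
         -p1, (p2 * (q1 - q2) + b) / (t1 - t2) + q1 - x, (p1 * (q1 - q2) - a) / (t1 - t2);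
         0, (p2 * (q2 - q1) - b) / (t1 - t2), (p1 * (q2 - q1) + a) / (t1 - t2)] := by
  ext i j
  fin_cases i <;> fin_cases j <;> simp [B52_1, sub_eq_neg_add]

theorem deriv_B52_1_apply (a b t1 t2 q1 p1 q2 p2 x : ℂ) (i j : Fin 3) :
    deriv (fun y => B52_1 a b t1 t2 q1 p1 q2 p2 y i j) x = !![0, 0, 0; 0, -1, 0; 0, 0, 0] i j := by
  fin_cases i <;> fin_cases j <;> simp [B52_1_eq]

theorem hasDerivAt_A52_apply_of_hamiltonian_1 {a b t1 t2 : ℂ} {q1 p1 q2 p2 : ℂ → ℂ}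
    (ht : t1 ≠ t2)
    (hq1 : HasDerivAt q1 (deriv (fun w => HG52_1 a b t1 t2 (q1 t1) w (q2 t1) (p2 t1)) (p1 t1)) t1)
    (hp1 : HasDerivAt p1 (-deriv (fun w => HG52_1 a b t1 t2 w (p1 t1) (q2 t1) (p2 t1)) (q1 t1)) t1)
    (hq2 : HasDerivAt q2 (deriv (fun w => HG52_1 a b t1 t2 (q1 t1) (p1 t1) (q2 t1) w) (p2 t1)) t1)
    (hp2 : HasDerivAt p2 (-deriv (fun w => HG52_1 a b t1 t2 (q1 t1) (p1 t1) w (p2 t1)) (q2 t1)) t1)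
    (x : ℂ) (i j : Fin 3) :
    HasDerivAt (fun s => A52 a b s t2 (q1 s) (p1 s) (q2 s) (p2 s) x i j)
      (deriv (fun y => B52_1 a b t1 t2 (q1 t1) (p1 t1) (q2 t1) (p2 t1) y i j) x
        - (A52 a b t1 t2 (q1 t1) (p1 t1) (q2 t1) (p2 t1) x
              * B52_1 a b t1 t2 (q1 t1) (p1 t1) (q2 t1) (p2 t1) x
            - B52_1 a b t1 t2 (q1 t1) (p1 t1) (q2 t1) (p2 t1) x
              * A52 a b t1 t2 (q1 t1) (p1 t1) (q2 t1) (p2 t1) x) i j) t1 := by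
  refine (hasDerivAt_A52_apply a b t2 x hq1 hp1 hq2 hp2 i j).congr_deriv ?_
  have ht' : t1 - t2 ≠ 0 := sub_ne_zero.mpr ht
  rw [deriv_B52_1_apply, deriv_HG52_1_p1, deriv_HG52_1_q1, deriv_HG52_1_p2, deriv_HG52_1_q2,
    A52_eq, B52_1_eq, Matrix.sub_apply, mul_apply, mul_apply, Fin.sum_univ_three,
    Fin.sum_univ_three]
  fin_cases i <;> fin_cases j <;>
    simp only [Fin.zero_eta, Fin.isValue, Fin.mk_one, Fin.reduceFinMk, of_apply, cons_val',
      cons_val, cons_val_zero, cons_val_one, cons_val_fin_one] <;>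
    field_simp <;> ring

theorem A52_submatrix_swap (a b t1 t2 q1 p1 q2 p2 x : ℂ) :
    (A52 b a t2 t1 q2 p2 q1 p1 x).submatrix (Equiv.swap 1 2) (Equiv.swap 1 2)
      = A52 a b t1 t2 q1 p1 q2 p2 x := by
  ext i j
  fin_cases i <;> fin_cases j <;>
    simp [A52_eq, Equiv.swap_apply_of_ne_of_ne, sub_eq_add_neg, add_comm]

theorem B52_1_submatrix_swap (a b t1 t2 q1 p1 q2 p2 x : ℂ) :
    (B52_1 b a t2 t1 q2 p2 q1 p1 x).submatrix (Equiv.swap 1 2) (Equiv.swap 1 2)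
      = B52_2 a b t1 t2 q1 p1 q2 p2 x := by
  ext i j
  fin_cases i <;> fin_cases j <;>
    simp [B52_1_eq, B52_2, Equiv.swap_apply_of_ne_of_ne, sub_eq_neg_add]

theorem hasDerivAt_A52_apply_of_hamiltonian_2 {a b t1 t2 : ℂ} {q1 p1 q2 p2 : ℂ → ℂ}
    (ht : t1 ≠ t2)
    (hq1 : HasDerivAt q1 (deriv (fun w => HG52_2 a b t1 t2 (q1 t2) w (q2 t2) (p2 t2)) (p1 t2)) t2)
    (hp1 : HasDerivAt p1 (-deriv (fun w => HG52_2 a b t1 t2 w (p1 t2) (q2 t2) (p2 t2)) (q1 t2)) t2)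
    (hq2 : HasDerivAt q2 (deriv (fun w => HG52_2 a b t1 t2 (q1 t2) (p1 t2) (q2 t2) w) (p2 t2)) t2)
    (hp2 : HasDerivAt p2 (-deriv (fun w => HG52_2 a b t1 t2 (q1 t2) (p1 t2) w (p2 t2)) (q2 t2)) t2)
    (x : ℂ) (i j : Fin 3) :
    HasDerivAt (fun s => A52 a b t1 s (q1 s) (p1 s) (q2 s) (p2 s) x i j)
      (deriv (fun y => B52_2 a b t1 t2 (q1 t2) (p1 t2) (q2 t2) (p2 t2) y i j) x
        - (A52 a b t1 t2 (q1 t2) (p1 t2) (q2 t2) (p2 t2) x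
              * B52_2 a b t1 t2 (q1 t2) (p1 t2) (q2 t2) (p2 t2) x
            - B52_2 a b t1 t2 (q1 t2) (p1 t2) (q2 t2) (p2 t2) x
              * A52 a b t1 t2 (q1 t2) (p1 t2) (q2 t2) (p2 t2) x) i j) t2 := by
  simp only [HG52_2_eq_HG52_1_swap] at hq1 hp1 hq2 hp2
  have h := hasDerivAt_A52_apply_of_hamiltonian_1 ht.symm hq2 hp2 hq1 hp1 x
    (Equiv.swap 1 2 i) (Equiv.swap 1 2 j)
  simpa only [← A52_submatrix_swap a b t1, ← B52_1_submatrix_swap a b t1 t2,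
    submatrix_mul_equiv, Matrix.sub_apply, submatrix_apply] using h

theorem stmt4_general (a b : ℂ) (D : Set (ℂ × ℂ))
    (hDne : ∀ z ∈ D, z.1 ≠ z.2)
    (q1 p1 q2 p2 : ℂ × ℂ → ℂ)
    (hq1t1 : ∀ z ∈ D, HasDerivAt (fun s => q1 (s, z.2))
      (deriv (fun w => HG52_1 a b z.1 z.2 (q1 z) w (q2 z) (p2 z)) (p1 z)) z.1)
    (hp1t1 : ∀ z ∈ D, HasDerivAt (fun s => p1 (s, z.2))
      (-(deriv (fun w => HG52_1 a b z.1 z.2 w (p1 z) (q2 z) (p2 z)) (q1 z))) z.1)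
    (hq2t1 : ∀ z ∈ D, HasDerivAt (fun s => q2 (s, z.2))
      (deriv (fun w => HG52_1 a b z.1 z.2 (q1 z) (p1 z) (q2 z) w) (p2 z)) z.1)
    (hp2t1 : ∀ z ∈ D, HasDerivAt (fun s => p2 (s, z.2))
      (-(deriv (fun w => HG52_1 a b z.1 z.2 (q1 z) (p1 z) w (p2 z)) (q2 z))) z.1)
    (hq1t2 : ∀ z ∈ D, HasDerivAt (fun s => q1 (z.1, s))
      (deriv (fun w => HG52_2 a b z.1 z.2 (q1 z) w (q2 z) (p2 z)) (p1 z)) z.2)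
    (hp1t2 : ∀ z ∈ D, HasDerivAt (fun s => p1 (z.1, s))
      (-(deriv (fun w => HG52_2 a b z.1 z.2 w (p1 z) (q2 z) (p2 z)) (q1 z))) z.2)
    (hq2t2 : ∀ z ∈ D, HasDerivAt (fun s => q2 (z.1, s))
      (deriv (fun w => HG52_2 a b z.1 z.2 (q1 z) (p1 z) (q2 z) w) (p2 z)) z.2)
    (hp2t2 : ∀ z ∈ D, HasDerivAt (fun s => p2 (z.1, s))
      (-(deriv (fun w => HG52_2 a b z.1 z.2 (q1 z) (p1 z) w (p2 z)) (q2 z))) z.2) :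
    ∀ z ∈ D, ∀ x : ℂ, ∀ i j : Fin 3,
      (HasDerivAt
          (fun s => A52 a b s z.2 (q1 (s, z.2)) (p1 (s, z.2)) (q2 (s, z.2)) (p2 (s, z.2)) x i j)
          (deriv (fun y => B52_1 a b z.1 z.2 (q1 z) (p1 z) (q2 z) (p2 z) y i j) x
            - (A52 a b z.1 z.2 (q1 z) (p1 z) (q2 z) (p2 z) x
                  * B52_1 a b z.1 z.2 (q1 z) (p1 z) (q2 z) (p2 z) x
                - B52_1 a b z.1 z.2 (q1 z) (p1 z) (q2 z) (p2 z) x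
                  * A52 a b z.1 z.2 (q1 z) (p1 z) (q2 z) (p2 z) x) i j) z.1)
      ∧
      (HasDerivAt
          (fun s => A52 a b z.1 s (q1 (z.1, s)) (p1 (z.1, s)) (q2 (z.1, s)) (p2 (z.1, s)) x i j)
          (deriv (fun y => B52_2 a b z.1 z.2 (q1 z) (p1 z) (q2 z) (p2 z) y i j) x
            - (A52 a b z.1 z.2 (q1 z) (p1 z) (q2 z) (p2 z) x
                  * B52_2 a b z.1 z.2 (q1 z) (p1 z) (q2 z) (p2 z) x
                - B52_2 a b z.1 z.2 (q1 z) (p1 z) (q2 z) (p2 z) x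
                  * A52 a b z.1 z.2 (q1 z) (p1 z) (q2 z) (p2 z) x) i j) z.2) := by
  intro z hz x i j
  refine ⟨hasDerivAt_A52_apply_of_hamiltonian_1 (hDne z hz) ?_ ?_ ?_ ?_ x i j,
    hasDerivAt_A52_apply_of_hamiltonian_2 (hDne z hz) ?_ ?_ ?_ ?_ x i j⟩
  exacts [hq1t1 z hz, hp1t1 z hz, hq2t1 z hz, hp2t1 z hz,
    hq1t2 z hz, hp1t2 z hz, hq2t2 z hz, hp2t2 z hz]

/-- The Hamiltonian system of the 5/2+1+1 degenerate Garnier system implies the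
zero-curvature (isomonodromy) equations for its Lax pair. -/
theorem stmt4 (a b : ℂ) (D : Set (ℂ × ℂ)) (hD : IsOpen D)
    (hDne : ∀ z ∈ D, z.1 ≠ z.2)
    (q1 p1 q2 p2 : ℂ × ℂ → ℂ)
    (hq1a : AnalyticOnNhd ℂ q1 D) (hp1a : AnalyticOnNhd ℂ p1 D)
    (hq2a : AnalyticOnNhd ℂ q2 D) (hp2a : AnalyticOnNhd ℂ p2 D)
    (hq1t1 : ∀ z ∈ D, HasDerivAt (fun s => q1 (s, z.2))
      (deriv (fun w => HG52_1 a b z.1 z.2 (q1 z) w (q2 z) (p2 z)) (p1 z)) z.1)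
    (hp1t1 : ∀ z ∈ D, HasDerivAt (fun s => p1 (s, z.2))
      (-(deriv (fun w => HG52_1 a b z.1 z.2 w (p1 z) (q2 z) (p2 z)) (q1 z))) z.1)
    (hq2t1 : ∀ z ∈ D, HasDerivAt (fun s => q2 (s, z.2))
      (deriv (fun w => HG52_1 a b z.1 z.2 (q1 z) (p1 z) (q2 z) w) (p2 z)) z.1)
    (hp2t1 : ∀ z ∈ D, HasDerivAt (fun s => p2 (s, z.2))
      (-(deriv (fun w => HG52_1 a b z.1 z.2 (q1 z) (p1 z) w (p2 z)) (q2 z))) z.1)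
    (hq1t2 : ∀ z ∈ D, HasDerivAt (fun s => q1 (z.1, s))
      (deriv (fun w => HG52_2 a b z.1 z.2 (q1 z) w (q2 z) (p2 z)) (p1 z)) z.2)
    (hp1t2 : ∀ z ∈ D, HasDerivAt (fun s => p1 (z.1, s))
      (-(deriv (fun w => HG52_2 a b z.1 z.2 w (p1 z) (q2 z) (p2 z)) (q1 z))) z.2)
    (hq2t2 : ∀ z ∈ D, HasDerivAt (fun s => q2 (z.1, s))
      (deriv (fun w => HG52_2 a b z.1 z.2 (q1 z) (p1 z) (q2 z) w) (p2 z)) z.2)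
    (hp2t2 : ∀ z ∈ D, HasDerivAt (fun s => p2 (z.1, s))
      (-(deriv (fun w => HG52_2 a b z.1 z.2 (q1 z) (p1 z) w (p2 z)) (q2 z))) z.2) :
    ∀ z ∈ D, ∀ x : ℂ, ∀ i j : Fin 3,
      (HasDerivAt
          (fun s => A52 a b s z.2 (q1 (s, z.2)) (p1 (s, z.2)) (q2 (s, z.2)) (p2 (s, z.2)) x i j)
          (deriv (fun y => B52_1 a b z.1 z.2 (q1 z) (p1 z) (q2 z) (p2 z) y i j) x
            - (A52 a b z.1 z.2 (q1 z) (p1 z) (q2 z) (p2 z) x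
                  * B52_1 a b z.1 z.2 (q1 z) (p1 z) (q2 z) (p2 z) x
                - B52_1 a b z.1 z.2 (q1 z) (p1 z) (q2 z) (p2 z) x
                  * A52 a b z.1 z.2 (q1 z) (p1 z) (q2 z) (p2 z) x) i j) z.1)
      ∧
      (HasDerivAt
          (fun s => A52 a b z.1 s (q1 (z.1, s)) (p1 (z.1, s)) (q2 (z.1, s)) (p2 (z.1, s)) x i j)
          (deriv (fun y => B52_2 a b z.1 z.2 (q1 z) (p1 z) (q2 z) (p2 z) y i j) x
            - (A52 a b z.1 z.2 (q1 z) (p1 z) (q2 z) (p2 z) x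
                  * B52_2 a b z.1 z.2 (q1 z) (p1 z) (q2 z) (p2 z) x
                - B52_2 a b z.1 z.2 (q1 z) (p1 z) (q2 z) (p2 z) x
                  * A52 a b z.1 z.2 (q1 z) (p1 z) (q2 z) (p2 z) x) i j) z.2) :=
  stmt4_general a b D hDne q1 p1 q2 p2 hq1t1 hp1t1 hq2t1 hp2t1 hq1t2 hp1t2 hq2t2 hp2t2
end

section
/- Fix θ01, θi1, θi2, θi3 ∈ ℂ, t ∈ ℂ∖{0}, and q1, p1, q2, p2 ∈ ℂ. Then there exists a function c of ε (independent of q1, p1, q2, p2) such that, as ε → 0 with ε ≠ 0, ε·HFS4(θ01, 1/ε, θi3 − 1/ε, θi2, θi1; εt; −q1/(εt), −εt·p1, −q2/(εt), −εt·p2) + (p1q1 + p2q2)/t − c(ε) converges to HIII(−θ01 − θi2, θi3 − θi2; t; q1, p1) + HIII(−θi1, θi3 − θi1; t; q2, p2) + p1q2(p2(q1 + q2) − θi1)/t, which is the degenerate Fuji–Suzuki Hamiltonian of type A3. (Degeneration of the degenerate Fuji–Suzuki system of type A4 to the one of type A3, corresponding to the confluence (11)(1),21,111 → (11)(1),(11)(1).)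 -/
open Filter Topology

/-- Sixth Painlevé Hamiltonian `HVI(a,b,c,d;t;q,p)`. -/
noncomputable def HVI (a b c d t q p : ℂ) : ℂ :=
  (q * (q - 1) * (q - t) * p ^ 2
    + (d * q * (q - 1) - (2 * a + b + c + d) * q * (q - t) + c * (q - 1) * (q - t)) * p
    + a * (a + b) * (q - t)) / (t * (t - 1))

/-- Fifth Painlevé Hamiltonian `HV(a,b,c;t;q,p)`. -/
noncomputable def HV (a b c t q p : ℂ) : ℂ :=
  (p * (p + t) * q * (q - 1) + b * p * q + c * p - (a + c) * t * q) / t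

/-- Third Painlevé Hamiltonian `HIII(a,b;t;q,p)` (type D6). -/
noncomputable def HIII (a b t q p : ℂ) : ℂ :=
  (p ^ 2 * q ^ 2 - (q ^ 2 - b * q - t) * p - a * q) / t

/-- The Fuji–Suzuki Hamiltonian of type A5. -/
noncomputable def HFS5 (θ01 θ02 θ1 θt θi1 θi2 θi3 t q1 p1 q2 p2 : ℂ) : ℂ :=
  HVI (θ02 + θi2) (θ1 + θi3) (θt + θi3) (θ01 - θ02 + 1) t q1 p1
    + HVI θi3 (θ02 + θ1 + θi2) (θ02 + θt + θi2) (θ01 - θ02 - θi2 + 1) t q2 p2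
    + (q1 - t) * (q2 - 1) * ((p1 * q1 - θ02 - θi2) * p2 + p1 * (p2 * q2 - θi3))
        / (t * (t - 1))

/-- The Noumi–Yamada Hamiltonian of type A5. -/
noncomputable def HNY5 (θ01 θ02 θ1 θi1 θi2 θi3 t q1 p1 q2 p2 : ℂ) : ℂ :=
  HV (θi1 - 1) (θ01 - θ02 + θi1 - θi2 - θi3 - 1) (-θi1 + θi3 + 1) t q1 p1
    + HV (θ02 + θi1 - θi3 - 1) (θ01 - θ02 + θi1 - θi2 - θi3 - 1)
        (-θi1 + θi2 + θi3 + 1) t q2 p2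
    + 2 * p1 * p2 * q1 * (q2 - 1) / t

/-- The degenerate Fuji–Suzuki Hamiltonian of type A4. -/
noncomputable def HFS4 (θ01 θ1 θi1 θi2 θi3 t q1 p1 q2 p2 : ℂ) : ℂ :=
  HV (θ01 + θ1 + θi2 + θi3) (θ1 + θi1 - θi2 - 1) (-θ1 - θi3) t q1 p1
    + HV (θ1 + θi3) (θ1 + θi1 - θi3 - 1) (-θ1) t q2 p2
    + p1 * (q2 - 1) * (p2 * (q1 + q2) - θi3) / t

set_option maxHeartbeats 1600000 in
/-- Degeneration of the degenerate Fuji–Suzuki system of type A4 to the one of type A3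
(confluence (11)(1),21,111 → (11)(1),(11)(1)). -/
theorem stmt17 (θ01 θi1 θi2 θi3 : ℂ) (t : ℂ) (ht : t ≠ 0) :
    ∃ c : ℂ → ℂ, ∀ q1 p1 q2 p2 : ℂ,
      Tendsto (fun ε : ℂ =>
          ε * HFS4 θ01 (1 / ε) (θi3 - 1 / ε) θi2 θi1 (ε * t)
              (-q1 / (ε * t)) (-(ε * t * p1)) (-q2 / (ε * t)) (-(ε * t * p2))
            + (p1 * q1 + p2 * q2) / t
            - c ε)
        (𝓝[≠] (0 : ℂ))
        (𝓝 (HIII (-θ01 - θi2) (θi3 - θi2) t q1 p1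
              + HIII (-θi1) (θi3 - θi1) t q2 p2
              + p1 * q2 * (p2 * (q1 + q2) - θi1) / t)) := by
  refine ⟨fun _ => 0, fun q1 p1 q2 p2 => ?_⟩
  set T : ℂ := HIII (-θ01 - θi2) (θi3 - θi2) t q1 p1
      + HIII (-θi1) (θi3 - θi1) t q2 p2
      + p1 * q2 * (p2 * (q1 + q2) - θi1) / t with hT
  set K : ℂ := q2 * p2 * (p2 - 1) + p1 * p2 * q2 + q1 * p1 * (p1 - 1) + q1 * p1 * p2 with hK
  have hlim : Tendsto (fun ε : ℂ => T + ε * K) (𝓝[≠] (0 : ℂ)) (𝓝 T) := by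
    have h0 : Tendsto (fun ε : ℂ => T + ε * K) (𝓝 (0 : ℂ)) (𝓝 (T + 0 * K)) :=
      (continuous_const.add (continuous_id.mul continuous_const)).tendsto 0
    simpa using h0.mono_left nhdsWithin_le_nhds
  refine Tendsto.congr' ?_ hlim
  filter_upwards [self_mem_nhdsWithin] with ε hε
  have hε' : ε ≠ 0 := hε
  set s : ℂ := ε⁻¹ with hsdef
  set r : ℂ := t⁻¹ with hrdef
  have hs : ε * s = 1 := mul_inv_cancel₀ hε'
  have hr : t * r = 1 := mul_inv_cancel₀ ht
  have d1 : ∀ a : ℂ, a / ε = a * s := fun a => by rw [div_eq_mul_inv]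
  have d2 : ∀ a : ℂ, a / t = a * r := fun a => by rw [div_eq_mul_inv]
  have d3 : ∀ a : ℂ, a / (ε * t) = a * (s * r) := fun a => by
    rw [div_eq_mul_inv, mul_inv, hsdef, hrdef]
  simp only [hT, hK, HFS4, HV, HIII, d1, d2, d3]
  linear_combination (-1 : ℂ) * ((t * r * p2 + t * r * p1 + t * r ^ 2 * q2 * θi1 - t * r ^ 2 * q2 * p2 + t * r ^ 2 * q2 * p2 * θi3 - t * r ^ 2 * q2 * p2 * θi1 - t * r ^ 2 * p1 * q2 * θi1 + t * r ^ 2 * q1 * θi2 + t * r ^ 2 * q1 * θ01 - t * r ^ 2 * q1 * p1 + t * r ^ 2 * q1 * p1 * θi3 - t * r ^ 2 * q1 * p1 * θi2 - t ^ 2 * r ^ 3 * q2 ^ 2 * p2 + t ^ 2 * r ^ 3 * q2 ^ 2 * p2 ^ 2 + t ^ 2 * r ^ 3 * p1 * q2 ^ 2 * p2 + t ^ 2 * r ^ 3 * q1 * p1 * q2 * p2 - t ^ 2 * r ^ 3 * q1 ^ 2 * p1 + t ^ 2 * r ^ 3 * q1 ^ 2 * p1 ^ 2 - ε * t ^ 2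 * r ^ 2 * q2 * p2 + ε * t ^ 2 * r ^ 2 * q2 * p2 ^ 2 + ε * t ^ 2 * r ^ 2 * p1 * q2 * p2 - ε * t ^ 2 * r ^ 2 * q1 * p1 + ε * t ^ 2 * r ^ 2 * q1 * p1 * p2 + ε * t ^ 2 * r ^ 2 * q1 * p1 ^ 2 + ε * s * t * r * p2 + ε * s * t * r * p1 + ε * s * t * r ^ 2 * q2 * θi1 - ε * s * t * r ^ 2 * q2 * p2 + ε * s * t * r ^ 2 * q2 * p2 * θi3 - ε * s * t * r ^ 2 * q2 * p2 * θi1 - ε * s * t * r ^ 2 * p1 * q2 * θi1 + ε * s * t * r ^ 2 * q1 * θi2 + ε * s * t * r ^ 2 * q1 * θ01 - ε * s * t * r ^ 2 * q1 * p1 + ε * s * t * r ^ 2 * q1 * p1 * θi3 - ε * s * t * r ^ 2 * q1 * p1 * θi2 - ε * s * t ^ 2 * r ^ 3 * q2 ^ 2 * p2 + ε * s * t ^ 2 * r ^ 3 * q2 ^ 2 * p2 ^ 2 + ε * s * t ^ 2 * r ^ 3 * p1 * q2 ^ 2 * p2 + ε * s * t ^ 2 * r ^ 3 * q1 * p1 *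 q2 * p2 - ε * s * t ^ 2 * r ^ 3 * q1 ^ 2 * p1 + ε * s * t ^ 2 * r ^ 3 * q1 ^ 2 * p1 ^ 2 - ε ^ 2 * s * t ^ 2 * r ^ 2 * q2 * p2 + ε ^ 2 * s * t ^ 2 * r ^ 2 * q2 * p2 ^ 2 + ε ^ 2 * s * t ^ 2 * r ^ 2 * p1 * q2 * p2 - ε ^ 2 * s * t ^ 2 * r ^ 2 * q1 * p1 + ε ^ 2 * s * t ^ 2 * r ^ 2 * q1 * p1 * p2 + ε ^ 2 * s * t ^ 2 * r ^ 2 * q1 * p1 ^ 2 - ε ^ 2 * s ^ 2 * t ^ 2 * r ^ 3 * q2 ^ 2 * p2 + ε ^ 2 * s ^ 2 * t ^ 2 * r ^ 3 * q2 ^ 2 * p2 ^ 2 + ε ^ 2 * s ^ 2 * t ^ 2 * r ^ 3 * p1 * q2 ^ 2 * p2 + ε ^ 2 * s ^ 2 * t ^ 2 * r ^ 3 * q1 * p1 * q2 * p2 - ε ^ 2 * s ^ 2 * t ^ 2 * r ^ 3 * q1 ^ 2 * p1 + ε ^ 2 * s ^ 2 * t ^ 2 * r ^ 3 * q1 ^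 2 * p1 ^ 2) * hs) + (-1 : ℂ) * ((r * q2 * θi1 - r * q2 * p2 + r * q2 * p2 * θi3 - r * q2 * p2 * θi1 - r * q2 ^ 2 * p2 + r * q2 ^ 2 * p2 ^ 2 - r * p1 * q2 * θi1 + r * p1 * q2 ^ 2 * p2 + r * q1 * θi2 + r * q1 * θ01 - r * q1 * p1 + r * q1 * p1 * θi3 - r * q1 * p1 * θi2 + r * q1 * p1 * q2 * p2 - r * q1 ^ 2 * p1 + r * q1 ^ 2 * p1 ^ 2 - t * r ^ 2 * q2 ^ 2 * p2 + t * r ^ 2 * q2 ^ 2 * p2 ^ 2 + t * r ^ 2 * p1 * q2 ^ 2 * p2 + t * r ^ 2 * q1 * p1 * q2 * p2 - t * r ^ 2 * q1 ^ 2 * p1 + t * r ^ 2 * q1 ^ 2 * p1 ^ 2 - ε * q2 * p2 + ε * q2 * p2 ^ 2 + ε * p1 * q2 * p2 - ε * q1 * p1 + ε * q1 * p1 * p2 + ε * q1 * p1 ^ 2 - ε * t * r * q2 * p2 + ε * t * r * q2 * p2 ^ 2 + ε * t * r * p1 * q2 * p2 - ε * t * r * q1 * p1 + ε * t * r * q1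 * p1 * p2 + ε * t * r * q1 * p1 ^ 2) * hr)
end
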